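/- Vanishing tangential variation: for a strictly convex compact set M and nonzero p, lim_{γ→0} ⟨p, (s_M(p + γq) − s_M(p))/γ⟩ = 0 for any direction q. -/

import Mathlib

open RealInnerProductSpace Filter Topology

/-!
Two maximizers `a`, `b` of `⟪u, ·⟫` and `⟪v, ·⟫` on `M` satisfy
`0 ≤ ⟪u, a - b⟫ ≤ ⟪v - u, b - a⟫`, so with `u = p`, `v = p + γ • q` the quotient
`⟪p, γ⁻¹ • (s_M(p + γ • q) - s_M(p))⟫` is bounded by `‖q‖ * ‖s_M(p + γ • q) - s_M(p)‖`
(Cauchy–Schwarz). This tends to `0` because, by compactness of `M` and uniqueness of the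
maximizer for `p`, the contact function is continuous at `p`.
-/

variable {E : Type*} [NormedAddCommGroup E] [InnerProductSpace ℝ E]

theorem abs_inner_sub_le_of_isMaxOn {M : Set E} {u v a b : E} (ha : a ∈ M) (hb : b ∈ M)
    (hua : IsMaxOn (fun z => ⟪u, z⟫) M a) (hvb : IsMaxOn (fun z => ⟪v, z⟫) M b) :
    |⟪u, b - a⟫| ≤ ‖v - u‖ * ‖b - a‖ := by
  have hu : ⟪u, b - a⟫ ≤ 0 := by simpa [inner_sub_right] using hua hb
  have hv : 0 ≤ ⟪v, b - a⟫ := by simpa [inner_sub_right] using hvb ha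
  calc |⟪u, b - a⟫| ≤ ⟪v - u, b - a⟫ := by
        rw [abs_of_nonpos hu, inner_sub_left]; linarith
    _ ≤ ‖v - u‖ * ‖b - a‖ := real_inner_le_norm _ _

theorem isMaxOn_inner_of_mapClusterPt {M : Set E} {s : E → E} {p y : E}
    (hs : ∀ᶠ x in 𝓝 p, IsMaxOn (fun z => ⟪x, z⟫) M (s x)) (hy : MapClusterPt y (𝓝 p) s) :
    IsMaxOn (fun z => ⟪p, z⟫) M y := by
  obtain ⟨U, hUp, hUy⟩ := mapClusterPt_iff_ultrafilter.mp hy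
  intro z hz
  have hid : Tendsto id (U : Filter E) (𝓝 p) := hUp
  have hlhs : Tendsto (fun x => ⟪x, z⟫) U (𝓝 ⟪p, z⟫) := hid.inner tendsto_const_nhds
  have hrhs : Tendsto (fun x => ⟪x, s x⟫) U (𝓝 ⟪p, y⟫) := hid.inner hUy
  exact le_of_tendsto_of_tendsto hlhs hrhs ((hs.filter_mono hUp).mono fun x hx => hx hz)

theorem continuousAt_of_isMaxOn_inner {M : Set E} (hM : IsCompact M) {s : E → E} {p : E}
    (hs : ∀ᶠ x in 𝓝 p, s x ∈ M ∧ IsMaxOn (fun z => ⟪x, z⟫) M (s x))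
    (huniq : ∀ y ∈ M, IsMaxOn (fun z => ⟪p, z⟫) M y → y = s p) : ContinuousAt s p :=
  hM.tendsto_nhds_of_unique_mapClusterPt (hs.mono fun _ hx => hx.1) fun y hyM hy =>
    huniq y hyM (isMaxOn_inner_of_mapClusterPt (hs.mono fun _ hx => hx.2) hy)

theorem tangential_variation_vanishes_general {n : ℕ} (M : Set (EuclideanSpace ℝ (Fin n)))
    (hMc : IsCompact M)
    (sM : EuclideanSpace ℝ (Fin n) → EuclideanSpace ℝ (Fin n))
    (hsM : ∀ p : EuclideanSpace ℝ (Fin n), p ≠ 0 →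
      sM p ∈ M ∧ IsMaxOn (fun s => ⟪p, s⟫) M (sM p))
    (huniq : ∀ p : EuclideanSpace ℝ (Fin n), p ≠ 0 →
      ∀ s ∈ M, IsMaxOn (fun x => ⟪p, x⟫) M s → s = sM p)
    (p : EuclideanSpace ℝ (Fin n)) (hp : p ≠ 0)
    (q : EuclideanSpace ℝ (Fin n)) :
    Filter.Tendsto (fun γ : ℝ => ⟪p, γ⁻¹ • (sM (p + γ • q) - sM p)⟫)
      (nhdsWithin 0 {(0:ℝ)}ᶜ) (nhds 0) := by
  have hline : Tendsto (fun γ : ℝ => p + γ • q) (𝓝[≠] 0) (𝓝 p) := by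
    refine tendsto_nhdsWithin_of_tendsto_nhds ?_
    exact (continuous_const.add (continuous_id.smul continuous_const)).tendsto' _ _ (by simp)
  have hcont : ContinuousAt sM p :=
    continuousAt_of_isMaxOn_inner hMc ((eventually_ne_nhds hp).mono hsM) (huniq p hp)
  have hdiff : Tendsto (fun γ : ℝ => ‖q‖ * ‖sM (p + γ • q) - sM p‖) (𝓝[≠] 0) (𝓝 0) := by
    simpa using (((hcont.tendsto.comp hline).sub_const (sM p)).norm).const_mul ‖q‖
  refine squeeze_zero_norm' ?_ hdiff
  filter_upwards [hline.eventually_ne hp, self_mem_nhdsWithin] with γ hγq hγ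
  have hγ0 : γ ≠ 0 := hγ
  calc ‖⟪p, γ⁻¹ • (sM (p + γ • q) - sM p)⟫‖
      = |γ|⁻¹ * |⟪p, sM (p + γ • q) - sM p⟫| := by
        rw [real_inner_smul_right, Real.norm_eq_abs, abs_mul, abs_inv]
    _ ≤ |γ|⁻¹ * (‖(p + γ • q) - p‖ * ‖sM (p + γ • q) - sM p‖) := by
        gcongr
        exact abs_inner_sub_le_of_isMaxOn (hsM p hp).1 (hsM _ hγq).1 (hsM p hp).2 (hsM _ hγq).2
    _ = ‖q‖ * ‖sM (p + γ • q) - sM p‖ := by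
        rw [add_sub_cancel_left, norm_smul, Real.norm_eq_abs]
        field_simp

/-- Vanishing tangential variation: for a strictly convex compact set `M` and nonzero `p`,
`⟪p, (s_M(p + γq) - s_M(p))/γ⟫ → 0` as `γ → 0`, for any direction `q`. -/
theorem tangential_variation_vanishes {n : ℕ} (M : Set (EuclideanSpace ℝ (Fin n)))
    (hMc : IsCompact M) (hMs : StrictConvex ℝ M)
    (sM : EuclideanSpace ℝ (Fin n) → EuclideanSpace ℝ (Fin n))
    (hsM : ∀ p : EuclideanSpace ℝ (Fin n), p ≠ 0 →
      sM p ∈ M ∧ IsMaxOn (fun s => ⟪p, s⟫) M (sM p))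
    (huniq : ∀ p : EuclideanSpace ℝ (Fin n), p ≠ 0 →
      ∀ s ∈ M, IsMaxOn (fun x => ⟪p, x⟫) M s → s = sM p)
    (p : EuclideanSpace ℝ (Fin n)) (hp : p ≠ 0)
    (q : EuclideanSpace ℝ (Fin n)) :
    Filter.Tendsto (fun γ : ℝ => ⟪p, γ⁻¹ • (sM (p + γ • q) - sM p)⟫)
      (nhdsWithin 0 {(0:ℝ)}ᶜ) (nhds 0) :=
  tangential_variation_vanishes_general M hMc sM hsM huniq p hp q
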